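/- Let V ⊆ E be a subspace with x ∈ V and v ∉ V. Then V ∩ u(V) has codimension 1 in V, i.e. finrank_K V = finrank_K (V ∩ u(V)) + 1; equivalently, the quotient V / (V ∩ u(V)) is one-dimensional over K. In particular u(V) ≠ V. -/

import Mathlib

/-!
Let `f` be the coordinate along `x` for the splitting `E = K·x ⊕ (U ⊕ W)`. Then `u` is the
transvection `y ↦ y + f y • v`. For `y ∈ V`, `u y ∈ V` forces `f y • v ∈ V`, hence `f y = 0`
since `v ∉ V`; so `V ∩ u(V) = V ∩ ker f`, a hyperplane of `V` because `f x = 1` with `x ∈ V`.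
-/

open Module Submodule LinearMap

section Semiring

variable {R M : Type*} [Semiring R] [AddCommMonoid M] [Module R M]

theorem LinearMap.eq_transvection_of_sup_span_singleton_eq_top {u : M →ₗ[R] M} {f : Dual R M}
    {x v : M} {C : Submodule R M} (hspan : (R ∙ x) ⊔ C = ⊤) (hfx : f x = 1) (hfC : C ≤ ker f)
    (hux : u x = x + v) (huC : C ≤ eqLocus u LinearMap.id) :
    u = transvection f v := by
  refine ext_on_codisjoint (codisjoint_iff.2 hspan) (le_eqLocus.1 ?_) (le_eqLocus.1 ?_)
  · rw [span_singleton_le_iff_mem, mem_eqLocus, transvection.apply, hfx, one_smul, hux]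
  · intro y hy
    rw [mem_eqLocus, transvection.apply, mem_ker.1 (hfC hy), zero_smul, add_zero]
    exact huC hy

end Semiring

section Field

variable {K E : Type*} [Field K] [AddCommGroup E] [Module K E]

theorem Submodule.exists_dual_eq_one_le_ker_of_notMem {p : Submodule K E} {x : E} (hx : x ∉ p) :
    ∃ f : Dual K E, f x = 1 ∧ p ≤ ker f := by
  obtain ⟨f, hpf, hfx⟩ := LinearMap.exists_extend_of_notMem (0 : p →ₗ[K] K) hx 1
  exact ⟨f, hfx, fun y hy ↦ by simpa using congr($hpf ⟨y, hy⟩)⟩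

theorem LinearMap.transvection.inf_map_eq_inf_ker {f : Dual K E} {v : E} {V : Submodule K E}
    (hv : v ∉ V) : V ⊓ V.map (transvection f v) = V ⊓ ker f := by
  ext y
  simp only [mem_inf, mem_map, mem_ker]
  constructor
  · rintro ⟨hyV, z, hzV, rfl⟩
    have hfz : f z = 0 := by
      by_contra hfz
      refine hv ((smul_mem_iff V hfz).1 ?_)
      simpa [transvection.apply] using V.sub_mem hyV hzV
    rw [transvection.apply, hfz, zero_smul, add_zero]
    exact ⟨hzV, hfz⟩
  · rintro ⟨hyV, hfy⟩
    exact ⟨hyV, y, hyV, by simp [transvection.apply, hfy]⟩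

theorem Submodule.finrank_quotient_comap_inf_ker_eq_one {f : Dual K E} {V : Submodule K E}
    {x : E} (hxV : x ∈ V) (hfx : f x ≠ 0) :
    finrank K (V ⧸ (V ⊓ ker f).comap V.subtype) = 1 := by
  have hker : (V ⊓ ker f).comap V.subtype = ker (f ∘ₗ V.subtype) := by
    rw [comap_inf, comap_subtype_self, top_inf_eq, ker_comp]
  have hsurj : Function.Surjective (f ∘ₗ V.subtype) :=
    surjective_of_ne_zero fun h ↦ hfx (by simpa using congr($h ⟨x, hxV⟩))
  rw [hker, (quotKerEquivOfSurjective _ hsurj).finrank_eq, finrank_self]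

theorem Submodule.finrank_eq_finrank_add_one_of_finrank_quotient_comap_eq_one
    {V N : Submodule K E} [FiniteDimensional K V] (hNV : N ≤ V)
    (h : finrank K (V ⧸ N.comap V.subtype) = 1) :
    finrank K V = finrank K N + 1 := by
  rw [← (comapSubtypeEquivOfLe hNV).finrank_eq, ← h, add_comm]
  exact ((N.comap V.subtype).finrank_quotient_add_finrank).symm

end Field

theorem codim_one_of_unipotent_translate_general
    {K E : Type*} [Field K] [AddCommGroup E] [Module K E] [FiniteDimensional K E]
    (U W : Submodule K E) (x : E) (hx : x ≠ 0)
    (hxdisj : (K ∙ x) ⊓ (U ⊔ W) = ⊥)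
    (hspan : U ⊔ (K ∙ x) ⊔ W = ⊤)
    (v : E)
    (u : E →ₗ[K] E)
    (huU : ∀ y ∈ U, u y = y) (huW : ∀ y ∈ W, u y = y) (hux : u x = x + v)
    (V : Submodule K E) (hxV : x ∈ V) (hvV : v ∉ V) :
    Module.finrank K V = Module.finrank K ↥(V ⊓ Submodule.map u V) + 1 ∧
    Module.finrank K (↥V ⧸ (V ⊓ Submodule.map u V).comap V.subtype) = 1 ∧
    Submodule.map u V ≠ V := by
  have hxUW : x ∉ U ⊔ W := fun h ↦
    hx <| (mem_bot K).1 <| hxdisj ▸ mem_inf.2 ⟨mem_span_singleton_self x, h⟩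
  obtain ⟨f, hfx, hfUW⟩ := exists_dual_eq_one_le_ker_of_notMem hxUW
  have hu : u = transvection f v :=
    eq_transvection_of_sup_span_singleton_eq_top (by rwa [sup_comm U, sup_assoc] at hspan) hfx
      hfUW hux (sup_le (huU · ·) (huW · ·))
  have hquot : finrank K (V ⧸ (V ⊓ V.map u).comap V.subtype) = 1 := by
    rw [hu, transvection.inf_map_eq_inf_ker hvV]
    exact finrank_quotient_comap_inf_ker_eq_one hxV (hfx ▸ one_ne_zero)
  have hcodim := finrank_eq_finrank_add_one_of_finrank_quotient_comap_eq_one inf_le_left hquot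
  refine ⟨hcodim, hquot, fun h ↦ ?_⟩
  rw [h, inf_idem] at hcodim
  omega

/-- with `E = U ⊕ K·x ⊕ W`, `v ∈ U`, and `u` the unipotent automorphism fixing
`U` and `W` pointwise and sending `x` to `x + v`, if `V ⊆ E` is a subspace with `x ∈ V` and
`v ∉ V`, then `V ∩ u(V)` has codimension `1` in `V`:
`finrank V = finrank (V ∩ u(V)) + 1`, equivalently the quotient `V/(V ∩ u(V))` is
one-dimensional; in particular `u(V) ≠ V`. -/
theorem codim_one_of_unipotent_translate
    {K E : Type*} [Field K] [AddCommGroup E] [Module K E] [FiniteDimensional K E]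
    (U W : Submodule K E) (x : E) (hx : x ≠ 0)
    (hUdisj : U ⊓ ((K ∙ x) ⊔ W) = ⊥)
    (hxdisj : (K ∙ x) ⊓ (U ⊔ W) = ⊥)
    (hWdisj : W ⊓ (U ⊔ (K ∙ x)) = ⊥)
    (hspan : U ⊔ (K ∙ x) ⊔ W = ⊤)
    (v : E) (hv : v ∈ U)
    (u : E →ₗ[K] E)
    (huU : ∀ y ∈ U, u y = y) (huW : ∀ y ∈ W, u y = y) (hux : u x = x + v)
    (V : Submodule K E) (hxV : x ∈ V) (hvV : v ∉ V) :
    Module.finrank K V = Module.finrank K ↥(V ⊓ Submodule.map u V) + 1 ∧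
    Module.finrank K (↥V ⧸ (V ⊓ Submodule.map u V).comap V.subtype) = 1 ∧
    Submodule.map u V ≠ V :=
  codim_one_of_unipotent_translate_general U W x hx hxdisj hspan v u huU huW hux V hxV hvV
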